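/- arXiv:2405.15038 — 3 statements merged into one kernel-verified Lean document; each statement's English description precedes it below -/
import Mathlib

section
/- Identifiability of the baseline effects: Suppose a, a† ∈ ℝ^n, W, W† ∈ ℝ^{n×K} with nonnegative entries, and U, U† ∈ ℝ^{n×d} with unit-norm rows (‖u_i‖₂ = ‖u†_i‖₂ = 1 for all i), and suppose W_{i'k'} = 0 and W†_{i'k'} = 0 for some i' ∈ [n], k' ∈ [K]. If a_i + a_j + W_{ik} W_{jk} ⟨u_i, u_j⟩ = a†_i + a†_j + W†_{ik} W†_{jk} ⟨u†_i, u†_j⟩ for all i, j ∈ [n] and k ∈ [K], then a = a†. -/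
theorem eq_of_forall_apply_add_apply_eq {ι G : Type*} [AddCancelMonoid G] [IsAddTorsionFree G]
    {a b : ι → G} (i : ι) (h : ∀ j, a i + a j = b i + b j) : a = b := by
  have hi : a i = b i := nsmul_right_injective two_ne_zero (by simpa only [two_nsmul] using h i)
  funext j
  exact add_left_cancel (hi ▸ h j)

theorem identifiability_baseline_general (n K d : ℕ)
    (a adag : Fin n → ℝ)
    (W Wdag : Matrix (Fin n) (Fin K) ℝ)
    (U Udag : Matrix (Fin n) (Fin d) ℝ)
    (hzero : ∃ i' : Fin n, ∃ k' : Fin K, W i' k' = 0 ∧ Wdag i' k' = 0)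
    (heq : ∀ i j : Fin n, ∀ k : Fin K,
      a i + a j + W i k * W j k * ∑ l, U i l * U j l
        = adag i + adag j + Wdag i k * Wdag j k * ∑ l, Udag i l * Udag j l) :
    a = adag := by
  obtain ⟨i', k', hW, hWdag⟩ := hzero
  refine eq_of_forall_apply_add_apply_eq i' fun j => ?_
  simpa only [hW, hWdag, zero_mul, add_zero] using heq i' j k'

/-- **Identifiability of the baseline effects.**
If two parameter sets `(a, W, U)` and `(a†, W†, U†)` with nonnegative weights,
unit-norm latent positions, and a common zero entry of the weight matrices
produce the same log-odds `a_i + a_j + W_{ik} W_{jk} ⟨u_i, u_j⟩` for all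
`i, j, k`, then the baseline effects agree: `a = a†`. -/
theorem identifiability_baseline (n K d : ℕ)
    (a adag : Fin n → ℝ)
    (W Wdag : Matrix (Fin n) (Fin K) ℝ)
    (U Udag : Matrix (Fin n) (Fin d) ℝ)
    (hW : ∀ i k, 0 ≤ W i k) (hWdag : ∀ i k, 0 ≤ Wdag i k)
    (hUnorm : ∀ i, ∑ l, (U i l) ^ 2 = 1)
    (hUdagnorm : ∀ i, ∑ l, (Udag i l) ^ 2 = 1)
    (hzero : ∃ i' : Fin n, ∃ k' : Fin K, W i' k' = 0 ∧ Wdag i' k' = 0)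
    (heq : ∀ i j : Fin n, ∀ k : Fin K,
      a i + a j + W i k * W j k * ∑ l, U i l * U j l
        = adag i + adag j + Wdag i k * Wdag j k * ∑ l, Udag i l * Udag j l) :
    a = adag :=
  identifiability_baseline_general n K d a adag W Wdag U Udag hzero heq
end

section
/- Identifiability of the preference weights given equal baseline effects: Suppose a ∈ ℝ^n, W, W† ∈ ℝ^{n×K} with nonnegative entries, and U, U† ∈ ℝ^{n×d} with unit-norm rows (‖u_i‖₂ = ‖u†_i‖₂ = 1 for all i). If a_i + a_j + W_{ik} W_{jk} ⟨u_i, u_j⟩ = a_i + a_j + W†_{ik} W†_{jk} ⟨u†_i, u†_j⟩ for all i, j ∈ [n] and k ∈ [K] (in particular for i = j), then W = W†. -/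
open Matrix Finset

/-- **Identifiability of the preference weights given equal baseline effects.**
If `(a, W, U)` and `(a, W†, U†)` with nonnegative weights and unit-norm latent
positions produce the same log-odds `a_i + a_j + W_{ik} W_{jk} ⟨u_i, u_j⟩` for
all `i, j, k` (in particular for `i = j`), then `W = W†`. -/
theorem identifiability_weights (n K d : ℕ)
    (a : Fin n → ℝ)
    (W Wdag : Matrix (Fin n) (Fin K) ℝ)
    (U Udag : Matrix (Fin n) (Fin d) ℝ)
    (hW : ∀ i k, 0 ≤ W i k) (hWdag : ∀ i k, 0 ≤ Wdag i k)
    (hUnorm : ∀ i, ∑ l, (U i l) ^ 2 = 1)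
    (hUdagnorm : ∀ i, ∑ l, (Udag i l) ^ 2 = 1)
    (heq : ∀ i j : Fin n, ∀ k : Fin K,
      a i + a j + W i k * W j k * ∑ l, U i l * U j l
        = a i + a j + Wdag i k * Wdag j k * ∑ l, Udag i l * Udag j l) :
    W = Wdag := by
  ext i k
  have hdiag := heq i i k
  have hU : ∑ l, U i l * U i l = 1 := by simpa only [sq] using hUnorm i
  have hUdag : ∑ l, Udag i l * Udag i l = 1 := by simpa only [sq] using hUdagnorm i
  rw [hU, hUdag, mul_one, mul_one, add_right_inj] at hdiag
  exact (mul_self_inj (hW i k) (hWdag i k)).mp hdiag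
end

section
/- Hard-thresholding relative error bound with over-specified sparsity: Let W, W* ∈ ℝ^{n×K} with ‖W*‖_0 ≤ s* and let s = γ s* for some γ > 1 (with s < nK). Let T_s(W) denote the matrix obtained from W by keeping its s entries of largest absolute value and setting all other entries to zero. Then ‖T_s(W) − W*‖_F² ≤ (1 + 2√(s*/(s − s*))) ‖W − W*‖_F². -/
open Finset

/-!
Write `x = W`, `y = W*`; let `A` be the support entries of `y` discarded by the thresholding and
`B` the kept entries off the support. Passing from `x` to `T_s(x)` changes the error only off `S`,
and increases it only on `A`, by at most `‖x_A‖² + 2 ‖x_A‖ ‖(x - y)_A‖` (Cauchy–Schwarz). Every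
kept entry dominates every discarded one and `x = x - y` on `B`, so
`‖x_A‖² ≤ (|A|/|B|) ‖(x - y)_B‖²`. Counting supports gives `|A| ≤ s*` and `|B| ≥ s - s*`, and
AM–GM bounds the excess by `2 √(s*/(s - s*)) (‖(x - y)_A‖² + ‖(x - y)_B‖²)`.
-/

theorem Finset.card_nsmul_sum_le_card_nsmul_sum {ι M : Type*} [AddCommMonoid M] [PartialOrder M]
    [IsOrderedAddMonoid M] {A B : Finset ι} {g : ι → M} (h : ∀ a ∈ A, ∀ b ∈ B, g a ≤ g b) :
    #B • ∑ a ∈ A, g a ≤ #A • ∑ b ∈ B, g b :=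
  calc #B • ∑ a ∈ A, g a = ∑ a ∈ A, ∑ _b ∈ B, g a := by simp only [sum_const, smul_sum]
    _ ≤ ∑ _a ∈ A, ∑ b ∈ B, g b := sum_le_sum fun a ha => sum_le_sum fun b hb => h a ha b hb
    _ = #A • ∑ b ∈ B, g b := sum_const _

theorem Finset.sum_le_card_div_card_mul_sum {ι : Type*} {A B : Finset ι} {g : ι → ℝ}
    (hAB : #A ≤ #B) (h : ∀ a ∈ A, ∀ b ∈ B, g a ≤ g b) :
    ∑ a ∈ A, g a ≤ (#A / #B : ℝ) * ∑ b ∈ B, g b := by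
  rcases B.eq_empty_or_nonempty with rfl | hB
  · simp_all
  · have h' := card_nsmul_sum_le_card_nsmul_sum h
    rw [nsmul_eq_mul, nsmul_eq_mul] at h'
    rw [div_mul_eq_mul_div, le_div_iff₀ (by simpa using hB)]
    linarith

theorem add_two_mul_sqrt_mul_sqrt_le {q a b r : ℝ} (ha : 0 ≤ a) (hb : 0 ≤ b) (hr : r ≤ 1)
    (hq : q ≤ r * b) : q + 2 * (√q * √a) ≤ 2 * √r * (a + b) := by
  have hr_le_sqrt : r ≤ √r := by
    rcases le_or_gt r 0 with h | h
    · exact h.trans (Real.sqrt_nonneg r)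
    · exact Real.le_sqrt_of_sq_le (by nlinarith)
  have hsqrt_q : √q ≤ √r * √b := by
    rw [← Real.sqrt_mul' _ hb]
    exact Real.sqrt_le_sqrt hq
  have amgm : 2 * (√a * √b) ≤ a + b := by
    nlinarith [sq_nonneg (√a - √b), Real.sq_sqrt ha, Real.sq_sqrt hb]
  nlinarith [Real.sqrt_nonneg a, Real.sqrt_nonneg r, Real.sqrt_nonneg b]

theorem cast_div_cast_le_div_sub {a b s s' : ℕ} (ha : a ≤ s') (hb : s ≤ b + s')
    (hs : s' = 0 ∨ s' < s) : (a / b : ℝ) ≤ s' / (s - s' : ℝ) := by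
  rcases hs with rfl | hs
  · simp [Nat.le_zero.mp ha]
  · have hs' : (s' : ℝ) < s := by exact_mod_cast hs
    have hb' : (s : ℝ) ≤ b + s' := by exact_mod_cast hb
    exact div_le_div₀ (by positivity) (by exact_mod_cast ha) (by linarith) (by linarith)

section HardThresholding

variable {ι : Type*} [Fintype ι] [DecidableEq ι]

theorem sum_sq_piecewise_sub_le (x y : ι → ℝ) (S : Finset ι) :
    ∑ i, (S.piecewise x 0 i - y i) ^ 2
      ≤ ∑ i, (x i - y i) ^ 2 + (∑ i ∈ (univ.filter fun i => y i ≠ 0) \ S, x i ^ 2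
        + 2 * (√(∑ i ∈ (univ.filter fun i => y i ≠ 0) \ S, x i ^ 2)
          * √(∑ i ∈ (univ.filter fun i => y i ≠ 0) \ S, (x i - y i) ^ 2))) := by
  set A := (univ.filter fun i => y i ≠ 0) \ S
  set e : ι → ℝ := fun i => (S.piecewise x 0 i - y i) ^ 2 - (x i - y i) ^ 2
  have he_nonpos : ∀ i ∉ A, e i ≤ 0 := by
    intro i hi
    by_cases hiS : i ∈ S
    · simp [e, hiS]
    · have hy : y i = 0 := by simpa [A, hiS] using hi
      simp [e, hiS, hy]
      positivity
  have he_A : ∀ i ∈ A, e i = x i ^ 2 + 2 * (-x i * (x i - y i)) := by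
    intro i hi
    simp only [e, piecewise_eq_of_notMem _ _ _ (mem_sdiff.1 hi).2, Pi.zero_apply]
    ring
  have cauchy_schwarz := Real.sum_mul_le_sqrt_mul_sqrt A (fun i => -x i) (fun i => x i - y i)
  simp only [neg_sq] at cauchy_schwarz
  calc ∑ i, (S.piecewise x 0 i - y i) ^ 2 = ∑ i, (x i - y i) ^ 2 + ∑ i, e i := by
        rw [← sum_add_distrib]
        simp [e]
    _ ≤ ∑ i, (x i - y i) ^ 2 + ∑ i ∈ A, e i := by
        have hout : ∑ i ∈ Aᶜ, e i ≤ 0 := sum_nonpos fun i hi => he_nonpos i (mem_compl.1 hi)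
        linarith [sum_add_sum_compl A e]
    _ = ∑ i, (x i - y i) ^ 2 + (∑ i ∈ A, x i ^ 2 + 2 * ∑ i ∈ A, -x i * (x i - y i)) := by
        rw [sum_congr rfl he_A, sum_add_distrib, mul_sum]
    _ ≤ _ := by gcongr

theorem sum_sq_piecewise_sub_le_of_largest (x y : ι → ℝ) (S : Finset ι) {s' : ℕ}
    (hy : #(univ.filter fun i => y i ≠ 0) ≤ s') (hS : s' = 0 ∨ s' < #S)
    (hlargest : ∀ i ∈ S, ∀ j ∉ S, |x j| ≤ |x i|) :
    ∑ i, (S.piecewise x 0 i - y i) ^ 2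
      ≤ (1 + 2 * √(s' / ((#S : ℝ) - s'))) * ∑ i, (x i - y i) ^ 2 := by
  set supp := univ.filter fun i => y i ≠ 0
  set A := supp \ S
  set B := S \ supp
  set E := ∑ i, (x i - y i) ^ 2
  have hcardA : #A + #(supp ∩ S) = #supp := card_sdiff_add_card_inter supp S
  have hcardB : #B + #(supp ∩ S) = #S := inter_comm S supp ▸ card_sdiff_add_card_inter S supp
  have hs'S : s' ≤ #S := by rcases hS with h | h <;> omega
  have hAB_card : #A ≤ #B := by omega
  have hdom : ∑ i ∈ A, x i ^ 2 ≤ (#A / #B : ℝ) * ∑ i ∈ B, (x i - y i) ^ 2 := by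
    have hB : ∀ i ∈ B, (x i - y i) ^ 2 = x i ^ 2 := fun i hi => by simp_all [B, supp]
    rw [sum_congr rfl hB]
    refine sum_le_card_div_card_mul_sum hAB_card fun i hi j hj => sq_le_sq.2 ?_
    exact hlargest j (mem_sdiff.1 hj).1 i (mem_sdiff.1 hi).2
  have hratio : (#A / #B : ℝ) ≤ s' / ((#S : ℝ) - s') :=
    cast_div_cast_le_div_sub (by omega) (by omega) hS
  have hAB : ∑ i ∈ A, (x i - y i) ^ 2 + ∑ i ∈ B, (x i - y i) ^ 2 ≤ E := by
    rw [← sum_union disjoint_sdiff_sdiff]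
    exact sum_le_univ_sum_of_nonneg fun i => sq_nonneg _
  calc ∑ i, (S.piecewise x 0 i - y i) ^ 2
      ≤ E + (∑ i ∈ A, x i ^ 2 + 2 * (√(∑ i ∈ A, x i ^ 2) * √(∑ i ∈ A, (x i - y i) ^ 2))) :=
        sum_sq_piecewise_sub_le x y S
    _ ≤ E + 2 * √(#A / #B : ℝ) * (∑ i ∈ A, (x i - y i) ^ 2 + ∑ i ∈ B, (x i - y i) ^ 2) := by
        gcongr
        exact add_two_mul_sqrt_mul_sqrt_le (by positivity) (by positivity)
          (div_le_one_of_le₀ (by exact_mod_cast hAB_card) (by positivity)) hdom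
    _ ≤ E + 2 * √(s' / ((#S : ℝ) - s')) * E := by gcongr
    _ = (1 + 2 * √(s' / ((#S : ℝ) - s'))) * E := by ring

end HardThresholding

theorem hard_thresholding_relative_error_general (n K s sstar : ℕ) (γ : ℝ)
    (hγ : 1 < γ) (hs : (s : ℝ) = γ * sstar)
    (W Wstar T : Matrix (Fin n) (Fin K) ℝ)
    (hWstar : (univ.filter fun p : Fin n × Fin K => Wstar p.1 p.2 ≠ 0).card ≤ sstar)
    (S : Finset (Fin n × Fin K))
    (hcard : S.card = s)
    (hlargest : ∀ p ∈ S, ∀ q ∉ S, |W q.1 q.2| ≤ |W p.1 p.2|)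
    (hT : ∀ i k, T i k = if (i, k) ∈ S then W i k else 0) :
    ∑ i, ∑ k, (T i k - Wstar i k) ^ 2
      ≤ (1 + 2 * Real.sqrt ((sstar : ℝ) / ((s : ℝ) - sstar)))
        * ∑ i, ∑ k, (W i k - Wstar i k) ^ 2 := by
  have hsstar : sstar = 0 ∨ sstar < #S := by
    refine (Nat.eq_zero_or_pos sstar).imp_right fun hpos => ?_
    have : (sstar : ℝ) < s := by
      rw [hs]
      exact lt_mul_left (by exact_mod_cast hpos) hγ
    exact hcard ▸ (by exact_mod_cast this)
  have hT' : ∀ p : Fin n × Fin K, T p.1 p.2 = S.piecewise (fun p => W p.1 p.2) 0 p := by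
    simp [hT, Finset.piecewise]
  have key := sum_sq_piecewise_sub_le_of_largest (fun p => W p.1 p.2) (fun p => Wstar p.1 p.2) S
    hWstar hsstar hlargest
  simp only [← hT', hcard] at key
  rwa [Fintype.sum_prod_type, Fintype.sum_prod_type] at key

/-- **Hard-thresholding relative error bound with over-specified sparsity.**
Let `Wstar` have at most `s*` nonzero entries and `s = γ s*` for some `γ > 1`
(with `s < nK`).  Let `T` be obtained from `W` by keeping a set `S` of `s`
entries of largest absolute value and zeroing the rest.  Then
`‖T - Wstar‖_F² ≤ (1 + 2 √(s*/(s - s*))) ‖W - Wstar‖_F²`. -/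
theorem hard_thresholding_relative_error (n K s sstar : ℕ) (γ : ℝ)
    (hγ : 1 < γ) (hs : (s : ℝ) = γ * sstar) (hsnK : s < n * K)
    (W Wstar T : Matrix (Fin n) (Fin K) ℝ)
    (hWstar : (univ.filter fun p : Fin n × Fin K => Wstar p.1 p.2 ≠ 0).card ≤ sstar)
    (S : Finset (Fin n × Fin K))
    (hcard : S.card = s)
    (hlargest : ∀ p ∈ S, ∀ q ∉ S, |W q.1 q.2| ≤ |W p.1 p.2|)
    (hT : ∀ i k, T i k = if (i, k) ∈ S then W i k else 0) :
    ∑ i, ∑ k, (T i k - Wstar i k) ^ 2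
      ≤ (1 + 2 * Real.sqrt ((sstar : ℝ) / ((s : ℝ) - sstar)))
        * ∑ i, ∑ k, (W i k - Wstar i k) ^ 2 :=
  hard_thresholding_relative_error_general n K s sstar γ hγ hs W Wstar T hWstar S hcard hlargest hT
end
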